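/- Let S be a finite poset with least element 0 such that M := ∑_{z ∈ S} μ(0,z) ≠ 0. Then the Redheffer matrix R(S) is invertible and its inverse satisfies (R^{-1})[x][y] = μ(x,y) − μ(0,y) · (∑_{z ≠ 0} μ(x,z)) / M, where μ is the Möbius function of S (with μ(x,y) = 0 unless x ≤ y). -/
import Mathlib

open Matrix Finset

variable {S : Type*}

/-- The Redheffer matrix of a finite poset with a least element `⊥`, over `ℚ`. -/
def posetRedheffer [PartialOrder S] [OrderBot S] [Fintype S] [DecidableEq S]
    [DecidableRel (α := S) (· ≤ ·)] : Matrix S S ℚ :=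
  fun x y => if x ≤ y ∨ y = ⊥ then 1 else 0

section aux
variable [PartialOrder S] [OrderBot S] [Fintype S] [DecidableEq S]
    [DecidableRel (α := S) (· ≤ ·)] [LocallyFiniteOrder S]

lemma aux_sum_mu (x y : S) :
    ∑ z : S, (if x ≤ z then (IncidenceAlgebra.mu ℚ z y : ℚ) else 0)
      = if x = y then 1 else 0 := by
  have h1 : ∑ z : S, (if x ≤ z then (IncidenceAlgebra.mu ℚ z y : ℚ) else 0)
      = ∑ z ∈ Icc x y, (if x ≤ z then (IncidenceAlgebra.mu ℚ z y : ℚ) else 0) := by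
    refine (Finset.sum_subset (Finset.subset_univ _) fun z _ hz => ?_).symm
    rw [mem_Icc] at hz
    split_ifs with h
    · exact IncidenceAlgebra.apply_eq_zero_of_not_le (fun hzy => hz ⟨h, hzy⟩) _
    · rfl
  have h2 := congrArg (fun f : IncidenceAlgebra ℚ S => f x y)
    (IncidenceAlgebra.zeta_mul_mu (𝕜 := ℚ) (α := S))
  simp only [IncidenceAlgebra.mul_apply, IncidenceAlgebra.one_apply,
    IncidenceAlgebra.zeta_apply] at h2
  rw [h1, ← h2]
  refine Finset.sum_congr rfl fun z hz => ?_
  rw [mem_Icc] at hz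
  simp [hz.1]

lemma aux_sum_T (x : S) :
    ∑ z : S, (if x ≤ z then
        (∑ w ∈ Finset.univ \ {(⊥ : S)}, IncidenceAlgebra.mu ℚ z w) else 0)
      = if x = ⊥ then 0 else 1 := by
  have : ∀ z : S, (if x ≤ z then
        (∑ w ∈ Finset.univ \ {(⊥ : S)}, IncidenceAlgebra.mu ℚ z w) else 0)
      = ∑ w ∈ Finset.univ \ {(⊥ : S)},
          (if x ≤ z then (IncidenceAlgebra.mu ℚ z w : ℚ) else 0) := by
    intro z; split_ifs with h <;> simp
  simp_rw [this]
  rw [Finset.sum_comm]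
  simp_rw [aux_sum_mu]
  rw [Finset.sum_ite_eq (Finset.univ \ {(⊥ : S)}) x (fun _ => (1 : ℚ))]
  simp

end aux

/-- If `M := ∑_{z ∈ S} μ(⊥, z) ≠ 0`, then the Redheffer matrix of `S` is invertible and
`(R⁻¹)ₓᵧ = μ(x,y) - μ(⊥,y) · (∑_{z ≠ ⊥} μ(x,z)) / M`. -/
theorem posetRedheffer_inv [PartialOrder S] [OrderBot S] [Fintype S] [DecidableEq S]
    [DecidableRel (α := S) (· ≤ ·)] [LocallyFiniteOrder S]
    (hM : (∑ z : S, IncidenceAlgebra.mu ℚ (⊥ : S) z) ≠ 0) :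
    IsUnit (posetRedheffer (S := S)).det ∧
      ∀ x y : S,
        (posetRedheffer (S := S))⁻¹ x y =
          IncidenceAlgebra.mu ℚ x y -
            IncidenceAlgebra.mu ℚ (⊥ : S) y *
              (∑ z ∈ Finset.univ \ {(⊥ : S)}, IncidenceAlgebra.mu ℚ x z) /
                (∑ z : S, IncidenceAlgebra.mu ℚ (⊥ : S) z) := by
  set M : ℚ := ∑ z : S, IncidenceAlgebra.mu ℚ (⊥ : S) z with hMdef
  set B : Matrix S S ℚ := fun x y =>
    IncidenceAlgebra.mu ℚ x y -
      IncidenceAlgebra.mu ℚ (⊥ : S) y *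
        (∑ z ∈ Finset.univ \ {(⊥ : S)}, IncidenceAlgebra.mu ℚ x z) / M with hB
  have hT_bot : (∑ z ∈ Finset.univ \ {(⊥ : S)}, IncidenceAlgebra.mu ℚ (⊥ : S) z) = M - 1 := by
    rw [hMdef, ← Finset.sum_sdiff (Finset.subset_univ {(⊥ : S)})]
    simp
  have key : posetRedheffer (S := S) * B = 1 := by
    ext x y
    rw [Matrix.mul_apply]
    have hsplit : ∀ z : S, posetRedheffer (S := S) x z * B z y
        = (if x ≤ z then B z y else 0) + (if z = ⊥ ∧ ¬ x ≤ z then B z y else 0) := by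
      intro z
      simp only [posetRedheffer]
      by_cases h2 : z = ⊥
      · subst h2
        by_cases h1 : x = ⊥
        · simp [h1]
        · simp [h1, fun h : x ≤ (⊥ : S) => h1 (le_bot_iff.1 h)]
      · by_cases h1 : x ≤ z <;> simp [h1, h2]
    simp_rw [hsplit, Finset.sum_add_distrib]
    have hBsum : ∑ z : S, (if x ≤ z then B z y else 0)
        = (if x = y then 1 else 0)
          - IncidenceAlgebra.mu ℚ (⊥ : S) y * (if x = ⊥ then 0 else 1) / M := by
      have : ∀ z : S, (if x ≤ z then B z y else 0)
          = (if x ≤ z then (IncidenceAlgebra.mu ℚ z y : ℚ) else 0)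
            - IncidenceAlgebra.mu ℚ (⊥ : S) y *
              (if x ≤ z then
                (∑ w ∈ Finset.univ \ {(⊥ : S)}, IncidenceAlgebra.mu ℚ z w) else 0) / M := by
        intro z; rw [hB]; split_ifs with h <;> simp
      simp_rw [this, Finset.sum_sub_distrib, aux_sum_mu, ← Finset.sum_div, ← Finset.mul_sum,
        aux_sum_T]
    have hrest : ∑ z : S, (if z = ⊥ ∧ ¬ x ≤ z then B z y else 0)
        = if x = ⊥ then 0 else B ⊥ y := by
      rw [Finset.sum_eq_single (⊥ : S)]
      · by_cases hx : x = ⊥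
        · simp [hx]
        · simp [hx, fun h : x ≤ (⊥ : S) => hx (le_bot_iff.1 h)]
      · intro b _ hb; simp [hb]
      · simp
    rw [hBsum, hrest]
    have hBbot : B ⊥ y = IncidenceAlgebra.mu ℚ (⊥ : S) y / M := by
      rw [hB]; simp only; rw [hT_bot]
      field_simp
      ring
    by_cases hx : x = ⊥
    · simp [hx, Matrix.one_apply]
    · rw [if_neg hx, if_neg hx, hBbot, Matrix.one_apply]
      ring
  refine ⟨Matrix.isUnit_det_of_right_inverse key, fun x y => ?_⟩
  rw [Matrix.inv_eq_right_inv key]
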